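/- Let ℱ be the singleton family of dangers consisting of the trivial danger of size 2, and let G be a graph on at least two vertices, viewed as a 2-uniform marked hypergraph with no marked vertex. Then G is a Breaker win if and only if J_1(ℱ,G) holds (equivalently, if and only if the edges of G are pairwise disjoint). -/

import Mathlib

namespace MB

/-- A marked hypergraph: a finite vertex set, an edge set of finite subsets of vertices,
and a set of marked vertices. -/
structure MarkedHypergraph (V : Type) where
  verts : Finset V
  edges : Finset (Finset V)
  marked : Finset V

namespace MarkedHypergraph

variable {V : Type} [DecidableEq V]

/-- The structural requirements on a marked hypergraph: nonempty vertex set, edges are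
nonempty subsets of the vertex set, marked vertices are vertices. -/
def IsValid (H : MarkedHypergraph V) : Prop :=
  H.verts.Nonempty ∧ (∀ e ∈ H.edges, e ⊆ H.verts ∧ e.Nonempty) ∧ H.marked ⊆ H.verts

/-- `k`-uniformity: every edge has exactly `k` vertices. -/
def IsUniform (H : MarkedHypergraph V) (k : ℕ) : Prop :=
  ∀ e ∈ H.edges, e.card = k

/-- `H^{+x}`: mark the vertex `x`. -/
def plus (H : MarkedHypergraph V) (x : V) : MarkedHypergraph V :=
  ⟨H.verts, H.edges, insert x H.marked⟩

/-- `H^{-y}`: remove the vertex `y` and all edges containing it. -/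
def minus (H : MarkedHypergraph V) (y : V) : MarkedHypergraph V :=
  ⟨H.verts.erase y, H.edges.filter fun e => y ∉ e, H.marked.erase y⟩

/-- `X` is a subhypergraph of `H`. -/
def IsSub (X H : MarkedHypergraph V) : Prop :=
  X.verts ⊆ H.verts ∧ X.edges ⊆ H.edges ∧ X.marked = X.verts ∩ H.marked

/-- A trivial Maker win: some edge has at most one non-marked vertex. -/
def TrivialMakerWin (H : MarkedHypergraph V) : Prop :=
  ∃ e ∈ H.edges, (e \ H.marked).card ≤ 1

theorem card_free_lt (H : MarkedHypergraph V) (x y : V)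
    (hy : y ∈ (H.plus x).verts \ (H.plus x).marked) :
    (((H.plus x).minus y).verts \ ((H.plus x).minus y).marked).card
      < (H.verts \ H.marked).card := by
  have hy' : y ∈ H.verts \ insert x H.marked := hy
  rw [Finset.mem_sdiff] at hy'
  have hyv : y ∈ H.verts := hy'.1
  have hym : y ∉ H.marked := fun h => hy'.2 (Finset.mem_insert_of_mem h)
  show (H.verts.erase y \ (insert x H.marked).erase y).card < (H.verts \ H.marked).card
  calc (H.verts.erase y \ (insert x H.marked).erase y).card
      ≤ ((H.verts \ H.marked).erase y).card := by
        apply Finset.card_le_card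
        intro v hv
        rw [Finset.mem_sdiff, Finset.mem_erase] at hv
        rw [Finset.mem_erase, Finset.mem_sdiff]
        exact ⟨hv.1.1, hv.1.2, fun hvm =>
          hv.2 (Finset.mem_erase.mpr ⟨hv.1.1, Finset.mem_insert_of_mem hvm⟩)⟩
    _ < (H.verts \ H.marked).card :=
        Finset.card_erase_lt_of_mem (Finset.mem_sdiff.mpr ⟨hyv, hym⟩)

/-- Maker win, defined by recursion on the number of non-marked vertices:
if at most one non-marked vertex remains, Maker wins iff the position is a trivial Maker
win; otherwise Maker wins iff he has a pick `x` such that for every answer `y` of Breaker,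
the resulting position is a Maker win. -/
def MakerWin (H : MarkedHypergraph V) : Prop :=
  if (H.verts \ H.marked).card ≤ 1 then TrivialMakerWin H
  else ∃ x ∈ H.verts \ H.marked,
    ∀ y ∈ (H.plus x).verts \ (H.plus x).marked, MakerWin ((H.plus x).minus y)
termination_by (H.verts \ H.marked).card
decreasing_by exact card_free_lt H _ _ (by assumption)

/-- Breaker win: not a Maker win. -/
def BreakerWin (H : MarkedHypergraph V) : Prop := ¬ H.MakerWin

open Classical in
/-- `τ_M(H)`: the minimum number of rounds Maker needs to claim a fully marked edge
(`⊤` if Breaker wins). -/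
noncomputable def tauM (H : MarkedHypergraph V) : ℕ∞ :=
  if TrivialMakerWin H then H.edges.inf fun e => ((e \ H.marked).card : ℕ∞)
  else if (H.verts \ H.marked).card ≤ 1 then (⊤ : ℕ∞)
  else 1 + (H.verts \ H.marked).inf fun x =>
    ((H.plus x).verts \ (H.plus x).marked).attach.sup fun y =>
      tauM ((H.plus x).minus y.1)
termination_by (H.verts \ H.marked).card
decreasing_by exact card_free_lt H _ _ y.2

end MarkedHypergraph

open MarkedHypergraph

variable {V : Type} [DecidableEq V]

/-- The intersection `I_H(𝒳)` of a collection `𝒳` of marked hypergraphs in `H`. -/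
def inter (H : MarkedHypergraph V) (𝒳 : Set (MarkedHypergraph V)) : Set V :=
  {y | y ∈ H.verts ∧ y ∉ H.marked ∧ ∀ X ∈ 𝒳, y ∈ X.verts}

/-- The union of a finite collection of marked hypergraphs. -/
def unionOf (O : Finset (MarkedHypergraph V)) : MarkedHypergraph V :=
  ⟨O.sup MarkedHypergraph.verts, O.sup MarkedHypergraph.edges, O.sup MarkedHypergraph.marked⟩

/-- Isomorphism of pointed marked hypergraphs. -/
def PointedIso (X : MarkedHypergraph V) (x : V) (Y : MarkedHypergraph V) (y : V) : Prop :=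
  ∃ φ : V → V, Set.InjOn φ ↑X.verts ∧ X.verts.image φ = Y.verts ∧
    (∀ e : Finset V, e ⊆ X.verts → (e ∈ X.edges ↔ e.image φ ∈ Y.edges)) ∧
    (∀ v ∈ X.verts, (v ∈ X.marked ↔ φ v ∈ Y.marked)) ∧ φ x = y

/-- `(D,x)` is a danger: `x` is a non-marked vertex and `D^{+x}` is a Maker win. -/
def IsDanger (D : MarkedHypergraph V) (x : V) : Prop :=
  x ∈ D.verts ∧ x ∉ D.marked ∧ (D.plus x).MakerWin

/-- A family of dangers: a set of pointed marked hypergraphs, all of which are dangers. -/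
def IsDangerFamily (F : Set (MarkedHypergraph V × V)) : Prop :=
  ∀ p ∈ F, IsDanger p.1 p.2

/-- The collection of all dangers at `x` in `H`: subhypergraphs `D` of `H` containing `x`
such that `D^{+x}` is a Maker win. -/
def dangersAt (H : MarkedHypergraph V) (x : V) : Set (MarkedHypergraph V) :=
  {D | D.IsValid ∧ D.IsSub H ∧ x ∈ D.verts ∧ (D.plus x).MakerWin}

/-- `xℱ(H)`: the collection of subhypergraphs `X` of `H` containing `x` such that `(X,x)`
is isomorphic to a member of the family `F`. -/
def xFam (F : Set (MarkedHypergraph V × V)) (H : MarkedHypergraph V) (x : V) :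
    Set (MarkedHypergraph V) :=
  {X | X.IsValid ∧ X.IsSub H ∧ x ∈ X.verts ∧ ∃ p ∈ F, PointedIso X x p.1 p.2}

/-- `J F r H` is the property `J_r(ℱ,H)` (for `r ≥ 1`; `J F 0 H` is `True` by convention). -/
def J (F : Set (MarkedHypergraph V × V)) : ℕ → MarkedHypergraph V → Prop
  | 0, _ => True
  | r + 1, H => ∀ x ∈ H.verts \ H.marked,
      ∃ y ∈ inter (H.plus x) (xFam F H x), J F r ((H.plus x).minus y)

/-- `P` is an `ab`-path (in a 3-uniform setting) of length `L`. -/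
def IsPathLen (P : MarkedHypergraph V) (a b : V) (L : ℕ) : Prop :=
  (L = 0 ∧ a = b ∧ P.verts = {a} ∧ P.edges = ∅) ∨
  (1 ≤ L ∧ a ≠ b ∧ ∃ e : ℕ → Finset V,
    P.edges = (Finset.range L).image e ∧
    P.verts = (Finset.range L).biUnion e ∧
    (∀ i, i < L → (e i).card = 3) ∧
    (∀ i j, i < L → j < L → i ≠ j → e i ≠ e j) ∧
    a ∈ e 0 ∧ b ∈ e (L - 1) ∧
    (∀ i, i + 1 < L → (e i ∩ e (i + 1)).card = 1) ∧
    (∀ i j, i + 2 ≤ j → j < L → e i ∩ e j = ∅) ∧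
    (∀ i, 1 ≤ i → i < L → a ∉ e i) ∧
    (∀ i, i + 1 < L → b ∉ e i))

/-- `P` is an `ab`-path. -/
def IsPath (P : MarkedHypergraph V) (a b : V) : Prop := ∃ L, IsPathLen P a b L

/-- `C` is an `a`-cycle of length `L`. -/
def IsCycleLen (C : MarkedHypergraph V) (a : V) (L : ℕ) : Prop :=
  2 ≤ L ∧ ∃ e : ℕ → Finset V,
    C.edges = (Finset.range L).image e ∧
    C.verts = (Finset.range L).biUnion e ∧
    (∀ i, i < L → (e i).card = 3) ∧
    (∀ i j, i < L → j < L → i ≠ j → e i ≠ e j) ∧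
    a ∈ e 0 ∧ a ∈ e (L - 1) ∧
    (∀ i, 0 < i → i + 1 < L → a ∉ e i) ∧
    (L = 2 → (e 0 ∩ e 1).card = 2) ∧
    (3 ≤ L → (e 0 ∩ e (L - 1) = {a} ∧ ∀ i, i + 1 < L → (e i ∩ e (i + 1)).card = 1)) ∧
    (∀ i j, i < j → j < L → 2 ≤ j - i → j - i ≤ L - 2 → e i ∩ e j = ∅)

/-- `C` is an `a`-cycle. -/
def IsCycle (C : MarkedHypergraph V) (a : V) : Prop := ∃ L, IsCycleLen C a L

/-- `T` is an `a`-tadpole: the union of an `ab`-path and a `b`-cycle meeting only at `b`. -/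
def IsTadpole (T : MarkedHypergraph V) (a : V) : Prop :=
  ∃ b P C, IsPath P a b ∧ IsCycle C b ∧ P.verts ∩ C.verts = {b} ∧
    T.verts = P.verts ∪ C.verts ∧ T.edges = P.edges ∪ C.edges

/-- `S` is an `x`-snake: an `xm`-path of positive length with `m` marked. -/
def IsSnake (S : MarkedHypergraph V) (x : V) : Prop :=
  ∃ m L, 1 ≤ L ∧ IsPathLen S x m L ∧ m ∈ S.marked

/-- `N` is a nunchaku: an `ab`-path of positive length with marked set exactly `{a,b}`. -/
def IsNunchaku (N : MarkedHypergraph V) : Prop :=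
  ∃ a b L, 1 ≤ L ∧ IsPathLen N a b L ∧ N.marked = {a, b}

/-- `C` is an `a`-necklace: an `a`-cycle with marked set exactly `{a}`. -/
def IsNecklace (C : MarkedHypergraph V) (a : V) : Prop :=
  ∃ L, IsCycleLen C a L ∧ C.marked = {a}

/-- The family `𝒮` of pointed snakes with exactly one marked vertex. -/
def famS : Set (MarkedHypergraph V × V) := {p | IsSnake p.1 p.2 ∧ p.1.marked.card = 1}

/-- The family `𝒞` of pointed cycles with no marked vertex. -/
def famC : Set (MarkedHypergraph V × V) := {p | IsCycle p.1 p.2 ∧ p.1.marked = ∅}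

/-- The family `𝒯` of pointed tadpoles with no marked vertex. -/
def famT : Set (MarkedHypergraph V × V) := {p | IsTadpole p.1 p.2 ∧ p.1.marked = ∅}

/-- `𝒟₀ = 𝒮 ∪ 𝒞`. -/
def famD0 : Set (MarkedHypergraph V × V) := famS ∪ famC

/-- `𝒟₁ = 𝒮 ∪ 𝒯`. -/
def famD1 : Set (MarkedHypergraph V × V) := famS ∪ famT

/-- `obs(ℱ)`: pointed marked hypergraphs `(D,x)` which, for some `ℱ`-dangerous vertex `z`,
are the union of a collection `𝒪` of subhypergraphs, each of which is (or becomes, once `x`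
is marked) an `ℱ`-danger at `z`, with `I_{D^{+x+z}}(𝒪) = ∅`. -/
def obs (F : Set (MarkedHypergraph V × V)) : Set (MarkedHypergraph V × V) :=
  {p | p.2 ∈ p.1.verts ∧ p.2 ∉ p.1.marked ∧
    ∃ z, z ∈ p.1.verts ∧ z ∉ p.1.marked ∧ z ≠ p.2 ∧
      ∃ O : Set (MarkedHypergraph V),
        (∀ X ∈ O, X.IsValid ∧ X.IsSub p.1) ∧
        (∀ X ∈ O, p.2 ∈ X.verts → X.plus p.2 ∈ xFam F (p.1.plus p.2) z) ∧
        (∀ X ∈ O, p.2 ∉ X.verts → X ∈ xFam F p.1 z) ∧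
        (∀ v ∈ p.1.verts, ∃ X ∈ O, v ∈ X.verts) ∧
        (∀ e ∈ p.1.edges, ∃ X ∈ O, e ∈ X.edges) ∧
        (∀ m ∈ p.1.marked, ∃ X ∈ O, m ∈ X.marked) ∧
        inter ((p.1.plus p.2).plus z) O = ∅}

/-- `obsr(ℱ)`: the members `(D,x)` of `obs(ℱ)` such that `D` contains no `ℱ`-danger at `x`. -/
def obsr (F : Set (MarkedHypergraph V × V)) : Set (MarkedHypergraph V × V) :=
  {p | p ∈ obs F ∧ xFam F p.1 p.2 = ∅}

/-- `ℱ^{*r}`. -/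
def star (F : Set (MarkedHypergraph V × V)) : ℕ → Set (MarkedHypergraph V × V)
  | 0 => F
  | r + 1 => F ∪ obs (star F r)

/-- `𝒟₂ = 𝒟₁ ∪ obsr(𝒟₁)`. -/
def famD2 : Set (MarkedHypergraph V × V) := famD1 ∪ obsr famD1

/-- The lengths of nunchakus contained in `H`. -/
def nunchakuLengths (H : MarkedHypergraph V) : Set ℕ :=
  {L | 1 ≤ L ∧ ∃ N a b, N.IsSub H ∧ IsPathLen N a b L ∧ N.marked = {a, b}}

/-- `H` contains a fully marked edge, a nunchaku, or a necklace. -/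
def WinPattern (H : MarkedHypergraph V) : Prop :=
  (∃ e ∈ H.edges, e ⊆ H.marked) ∨ (∃ N, N.IsSub H ∧ IsNunchaku N) ∨
    (∃ C a, C.IsSub H ∧ IsNecklace C a)

/-- `Wk k H`: Maker can force that after `k` rounds of play the updated marked hypergraph
contains a fully marked edge, a nunchaku or a necklace. -/
def Wk : ℕ → MarkedHypergraph V → Prop
  | 0, H => WinPattern H
  | k + 1, H => ∃ x ∈ H.verts \ H.marked,
      ∀ y ∈ (H.plus x).verts \ (H.plus x).marked, Wk k ((H.plus x).minus y)

end MB
/-- The family consisting of the trivial danger of size 2. -/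
def MB.famTriv2 {V : Type} [DecidableEq V] : Set (MB.MarkedHypergraph V × V) :=
  {p | ∃ v, v ≠ p.2 ∧ p.1.verts = {p.2, v} ∧
    p.1.edges = {({p.2, v} : Finset V)} ∧ p.1.marked = ∅}


/-!
If two edges of a graph share a vertex `x`, Maker claims `x`; Breaker can destroy only one of
the two edges, and the other one is then a trivial Maker win. If the edges are pairwise
disjoint, Breaker answers each move on an edge by claiming the other vertex of that edge
(a pairing strategy), so no edge is ever fully claimed by Maker. Finally, the trivial dangers
at `x` are the edges through `x`, so `J₁` asks for a vertex `y ≠ x` on every edge through `x`;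
in a graph with at least two vertices this holds for every `x` exactly when no two edges meet.
-/

namespace MB.MarkedHypergraph

variable {V : Type} [DecidableEq V] {e f : Finset V} {x y : V}

lemma makerWin_iff_of_card_le_one {H : MarkedHypergraph V} (h : (H.verts \ H.marked).card ≤ 1) :
    H.MakerWin ↔ H.TrivialMakerWin := by
  rw [MakerWin, if_pos h]

lemma makerWin_iff_of_one_lt_card {H : MarkedHypergraph V} (h : 1 < (H.verts \ H.marked).card) :
    H.MakerWin ↔ ∃ x ∈ H.verts \ H.marked,
      ∀ y ∈ (H.plus x).verts \ (H.plus x).marked, ((H.plus x).minus y).MakerWin := by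
  rw [MakerWin, if_neg (by omega)]

lemma mem_free_plus {H : MarkedHypergraph V} :
    y ∈ (H.plus x).verts \ (H.plus x).marked ↔ y ∈ H.verts \ H.marked ∧ y ≠ x := by
  simp only [plus, Finset.mem_sdiff, Finset.mem_insert]
  tauto

lemma mem_edges_plus_minus {H : MarkedHypergraph V} :
    e ∈ ((H.plus x).minus y).edges ↔ e ∈ H.edges ∧ y ∉ e :=
  Finset.mem_filter

lemma sdiff_marked_plus_minus {H : MarkedHypergraph V} (hy : y ∉ e) :
    e \ ((H.plus x).minus y).marked = (e \ H.marked).erase x := by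
  ext v
  simp only [plus, minus, Finset.mem_sdiff, Finset.mem_erase, Finset.mem_insert]
  constructor
  · rintro ⟨hv, hvm⟩
    exact ⟨fun hvx => hvm ⟨fun hvy => hy (hvy ▸ hv), Or.inl hvx⟩, hv,
      fun hvM => hvm ⟨fun hvy => hy (hvy ▸ hv), Or.inr hvM⟩⟩
  · rintro ⟨hvx, hv, hvM⟩
    exact ⟨hv, fun h => h.2.elim hvx hvM⟩

lemma edges_subset_verts_plus_minus {H : MarkedHypergraph V}
    (hsub : ∀ e ∈ H.edges, e ⊆ H.verts) :
    ∀ e ∈ ((H.plus x).minus y).edges, e ⊆ ((H.plus x).minus y).verts := by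
  intro e he v hv
  obtain ⟨he, hye⟩ := mem_edges_plus_minus.mp he
  exact Finset.mem_erase.mpr ⟨fun hvy => hye (hvy ▸ hv), hsub e he hv⟩

/-- Maker claims the last free vertex of the edge; whatever Breaker answers, the edge survives
with no free vertex left. -/
theorem TrivialMakerWin.makerWin {H : MarkedHypergraph V} (hsub : ∀ e ∈ H.edges, e ⊆ H.verts)
    (h : H.TrivialMakerWin) : H.MakerWin := by
  by_cases hle : (H.verts \ H.marked).card ≤ 1
  · exact (makerWin_iff_of_card_le_one hle).mpr h
  obtain ⟨e, he, hce⟩ := h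
  have hfree : e \ H.marked ⊆ H.verts \ H.marked := Finset.sdiff_subset_sdiff (hsub e he) le_rfl
  obtain ⟨x, hx, hex⟩ : ∃ x ∈ H.verts \ H.marked, e \ H.marked ⊆ {x} := by
    rcases (e \ H.marked).eq_empty_or_nonempty with h0 | ⟨v, hv⟩
    · obtain ⟨x, hx⟩ := Finset.card_pos.mp (by omega : 0 < (H.verts \ H.marked).card)
      exact ⟨x, hx, h0 ▸ Finset.empty_subset _⟩
    · exact ⟨v, hfree hv, fun w hw => Finset.mem_singleton.mpr
        (Finset.card_le_one.mp hce w hw v hv)⟩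
  refine (makerWin_iff_of_one_lt_card (by omega)).mpr ⟨x, hx, fun y hy => ?_⟩
  have hye : y ∉ e := fun hye =>
    (mem_free_plus.mp hy).2 (Finset.mem_singleton.mp
      (hex (Finset.mem_sdiff.mpr ⟨hye, (Finset.mem_sdiff.mp (mem_free_plus.mp hy).1).2⟩)))
  refine TrivialMakerWin.makerWin (edges_subset_verts_plus_minus hsub)
    ⟨e, mem_edges_plus_minus.mpr ⟨he, hye⟩, ?_⟩
  rw [sdiff_marked_plus_minus hye]
  exact (Finset.card_erase_le).trans hce
termination_by (H.verts \ H.marked).card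
decreasing_by exact card_free_lt H x y hy

theorem makerWin_of_mem_inter {H : MarkedHypergraph V} (hsub : ∀ e ∈ H.edges, e ⊆ H.verts)
    (he : e ∈ H.edges) (hf : f ∈ H.edges) (hce : (e \ H.marked).card ≤ 2)
    (hcf : (f \ H.marked).card ≤ 2) (hxe : x ∈ e \ H.marked) (hxf : x ∈ f)
    (hef : (e ∩ f) \ H.marked ⊆ {x}) : H.MakerWin := by
  have hfree : e \ H.marked ⊆ H.verts \ H.marked := Finset.sdiff_subset_sdiff (hsub e he) le_rfl
  by_cases hle : (H.verts \ H.marked).card ≤ 1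
  · exact TrivialMakerWin.makerWin hsub
      ⟨e, he, (Finset.card_le_card hfree).trans hle⟩
  refine (makerWin_iff_of_one_lt_card (by omega)).mpr ⟨x, hfree hxe, fun y hy => ?_⟩
  obtain ⟨hyfree, hyx⟩ := mem_free_plus.mp hy
  have hxM : x ∉ H.marked := (Finset.mem_sdiff.mp hxe).2
  have hyM : y ∉ H.marked := (Finset.mem_sdiff.mp hyfree).2
  have hsurvive : ∃ g ∈ H.edges, y ∉ g ∧ x ∈ g \ H.marked ∧ (g \ H.marked).card ≤ 2 := by
    by_cases hye : y ∈ e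
    · refine ⟨f, hf, fun hyf => hyx ?_, Finset.mem_sdiff.mpr ⟨hxf, hxM⟩, hcf⟩
      exact Finset.mem_singleton.mp
        (hef (Finset.mem_sdiff.mpr ⟨Finset.mem_inter.mpr ⟨hye, hyf⟩, hyM⟩))
    · exact ⟨e, he, hye, hxe, hce⟩
  obtain ⟨g, hg, hyg, hxg, hcg⟩ := hsurvive
  refine TrivialMakerWin.makerWin (edges_subset_verts_plus_minus hsub)
    ⟨g, mem_edges_plus_minus.mpr ⟨hg, hyg⟩, ?_⟩
  rw [sdiff_marked_plus_minus hyg, Finset.card_erase_of_mem hxg]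
  omega

lemma exists_pairing_answer {H : MarkedHypergraph V} (hsub : ∀ e ∈ H.edges, e ⊆ H.verts)
    (htwo : ∀ e ∈ H.edges, 2 ≤ (e \ H.marked).card)
    (hdisj : ∀ e ∈ H.edges, ∀ f ∈ H.edges, e ≠ f → e ∩ f = ∅)
    (hcard : 1 < (H.verts \ H.marked).card) :
    ∃ y ∈ (H.plus x).verts \ (H.plus x).marked, ∀ e ∈ H.edges, x ∈ e → y ∈ e := by
  by_cases hxE : ∃ e ∈ H.edges, x ∈ e
  · obtain ⟨e, he, hxe⟩ := hxE
    obtain ⟨y, hy, hyx⟩ := Finset.exists_mem_ne (htwo e he) x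
    refine ⟨y, mem_free_plus.mpr ⟨Finset.sdiff_subset_sdiff (hsub e he) le_rfl hy, hyx⟩,
      fun f hf hxf => ?_⟩
    obtain rfl : f = e := by
      by_contra hfe
      simpa [hdisj f hf e he hfe] using Finset.mem_inter.mpr ⟨hxf, hxe⟩
    exact (Finset.mem_sdiff.mp hy).1
  · push Not at hxE
    obtain ⟨y, hy, hyx⟩ := Finset.exists_mem_ne hcard x
    exact ⟨y, mem_free_plus.mpr ⟨hy, hyx⟩, fun e he hxe => absurd hxe (hxE e he)⟩

theorem not_makerWin_of_pairwise_disjoint {H : MarkedHypergraph V}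
    (hsub : ∀ e ∈ H.edges, e ⊆ H.verts)
    (htwo : ∀ e ∈ H.edges, 2 ≤ (e \ H.marked).card)
    (hdisj : ∀ e ∈ H.edges, ∀ f ∈ H.edges, e ≠ f → e ∩ f = ∅) : ¬ H.MakerWin := by
  by_cases hle : (H.verts \ H.marked).card ≤ 1
  · rw [makerWin_iff_of_card_le_one hle]
    rintro ⟨e, he, hce⟩
    have := htwo e he
    omega
  rw [makerWin_iff_of_one_lt_card (by omega)]
  rintro ⟨x, -, hwin⟩
  obtain ⟨y, hy, hxy⟩ := exists_pairing_answer hsub htwo hdisj (by omega)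
  refine not_makerWin_of_pairwise_disjoint (edges_subset_verts_plus_minus hsub)
    (fun f hf => ?_) (fun e he f hf => ?_) (hwin y hy)
  · obtain ⟨hf, hyf⟩ := mem_edges_plus_minus.mp hf
    have hxf : x ∉ (f \ H.marked) := fun h => hyf (hxy f hf (Finset.mem_sdiff.mp h).1)
    rw [sdiff_marked_plus_minus hyf, Finset.erase_eq_of_notMem hxf]
    exact htwo f hf
  · exact hdisj e (mem_edges_plus_minus.mp he).1 f (mem_edges_plus_minus.mp hf).1
termination_by (H.verts \ H.marked).card
decreasing_by exact card_free_lt H x y hy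

end MB.MarkedHypergraph

namespace MB

open MarkedHypergraph

variable {V : Type} [DecidableEq V] {G X : MarkedHypergraph V} {e f : Finset V} {x y : V}

lemma eq_of_card_eq_two_of_mem (he : e.card = 2) (hf : f.card = 2) (hxy : x ≠ y)
    (hxe : x ∈ e) (hye : y ∈ e) (hxf : x ∈ f) (hyf : y ∈ f) : e = f := by
  have hpair : ∀ g : Finset V, g.card = 2 → x ∈ g → y ∈ g → g = {x, y} := fun g hg hx hy =>
    (Finset.eq_of_subset_of_card_le (Finset.insert_subset hx (Finset.singleton_subset_iff.mpr hy))
      (by rw [hg, Finset.card_pair hxy])).symm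
  rw [hpair e he hxe hye, hpair f hf hxf hyf]

theorem makerWin_of_edges_meet (hsub : ∀ e ∈ G.edges, e ⊆ G.verts) (hunif : G.IsUniform 2)
    (hm : G.marked = ∅) (he : e ∈ G.edges) (hf : f ∈ G.edges) (hef : e ≠ f)
    (hx : x ∈ e ∩ f) : G.MakerWin := by
  obtain ⟨hxe, hxf⟩ := Finset.mem_inter.mp hx
  have hcard : ∀ g ∈ G.edges, (g \ G.marked).card ≤ 2 := fun g hg => by
    rw [hm, Finset.sdiff_empty, hunif g hg]
  refine makerWin_of_mem_inter hsub he hf (hcard e he) (hcard f hf) (by simpa [hm]) hxf ?_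
  intro y hy
  rw [hm, Finset.sdiff_empty, Finset.mem_inter] at hy
  refine Finset.mem_singleton.mpr (by_contra fun hyx => hef ?_)
  exact eq_of_card_eq_two_of_mem (hunif e he) (hunif f hf) (Ne.symm hyx) hxe hy.1 hxf hy.2

theorem breakerWin_iff_pairwise_disjoint (hsub : ∀ e ∈ G.edges, e ⊆ G.verts)
    (hunif : G.IsUniform 2) (hm : G.marked = ∅) :
    G.BreakerWin ↔ ∀ e ∈ G.edges, ∀ f ∈ G.edges, e ≠ f → e ∩ f = ∅ := by
  refine ⟨fun hbw e he f hf hef => ?_, fun hdisj => ?_⟩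
  · by_contra hne
    obtain ⟨x, hx⟩ := Finset.nonempty_iff_ne_empty.mpr hne
    exact hbw (makerWin_of_edges_meet hsub hunif hm he hf hef hx)
  · refine not_makerWin_of_pairwise_disjoint hsub (fun e he => ?_) hdisj
    rw [hm, Finset.sdiff_empty, hunif e he]

lemma verts_mem_edges_of_mem_xFam_famTriv2 (hX : X ∈ xFam famTriv2 G x) :
    X.verts ∈ G.edges := by
  obtain ⟨-, hXsub, -, _, ⟨_, -, hDverts, hDedges, -⟩, _, -, himg, hedge, -⟩ := hX
  refine hXsub.2.1 ((hedge X.verts le_rfl).mpr ?_)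
  rw [himg, hDedges, hDverts]
  exact Finset.mem_singleton_self _

lemma edge_mem_xFam_famTriv2 (hsub : e ⊆ G.verts) (he : e ∈ G.edges) (hcard : e.card = 2)
    (hm : G.marked = ∅) (hxe : x ∈ e) :
    (⟨e, {e}, ∅⟩ : MarkedHypergraph V) ∈ xFam famTriv2 G x := by
  obtain ⟨w, hw, hwx⟩ := Finset.exists_mem_ne (by omega : 1 < e.card) x
  have hew : e = {x, w} := (Finset.eq_of_subset_of_card_le
    (Finset.insert_subset hxe (Finset.singleton_subset_iff.mpr hw))
    (by rw [hcard, Finset.card_pair (Ne.symm hwx)])).symm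
  refine ⟨⟨⟨x, hxe⟩, fun g hg => ?_, Finset.empty_subset _⟩,
    ⟨hsub, Finset.singleton_subset_iff.mpr he, by simp [hm]⟩, hxe,
    (⟨e, {e}, ∅⟩, x), ⟨w, hwx, hew, by rw [hew], rfl⟩,
    id, Set.injOn_id _, Finset.image_id, fun g _ => by rw [Finset.image_id],
    fun _ _ => Iff.rfl, rfl⟩
  obtain rfl := Finset.mem_singleton.mp hg
  exact ⟨subset_rfl, ⟨x, hxe⟩⟩

lemma J_one_famTriv2_iff (hsub : ∀ e ∈ G.edges, e ⊆ G.verts) (hunif : G.IsUniform 2)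
    (hm : G.marked = ∅) :
    J famTriv2 1 G ↔ ∀ x ∈ G.verts \ G.marked,
      ∃ y ∈ (G.plus x).verts \ (G.plus x).marked, ∀ e ∈ G.edges, x ∈ e → y ∈ e := by
  have hinter : ∀ x y, y ∈ inter (G.plus x) (xFam famTriv2 G x) ↔
      y ∈ (G.plus x).verts \ (G.plus x).marked ∧ ∀ e ∈ G.edges, x ∈ e → y ∈ e := by
    intro x y
    refine ⟨fun ⟨hyv, hyM, hyX⟩ => ⟨Finset.mem_sdiff.mpr ⟨hyv, hyM⟩, fun e he hxe => ?_⟩,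
      fun ⟨hy, hyE⟩ => ⟨(Finset.mem_sdiff.mp hy).1, (Finset.mem_sdiff.mp hy).2, fun X hX => ?_⟩⟩
    · exact hyX _ (edge_mem_xFam_famTriv2 (hsub e he) he (hunif e he) hm hxe)
    · exact hyE _ (verts_mem_edges_of_mem_xFam_famTriv2 hX) hX.2.2.1
  simp only [J, hinter, and_true]

theorem J_one_famTriv2_iff_pairwise_disjoint (hsub : ∀ e ∈ G.edges, e ⊆ G.verts)
    (hunif : G.IsUniform 2) (hm : G.marked = ∅) (hcard : 2 ≤ G.verts.card) :
    J famTriv2 1 G ↔ ∀ e ∈ G.edges, ∀ f ∈ G.edges, e ≠ f → e ∩ f = ∅ := by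
  rw [J_one_famTriv2_iff hsub hunif hm]
  refine ⟨fun hJ e he f hf hef => ?_, fun hdisj x _ => ?_⟩
  · by_contra hne
    obtain ⟨x, hx⟩ := Finset.nonempty_iff_ne_empty.mpr hne
    obtain ⟨hxe, hxf⟩ := Finset.mem_inter.mp hx
    obtain ⟨y, hy, hyE⟩ := hJ x (by simpa [hm] using hsub e he hxe)
    exact hef (eq_of_card_eq_two_of_mem (hunif e he) (hunif f hf) (mem_free_plus.mp hy).2.symm
      hxe (hyE e he hxe) hxf (hyE f hf hxf))
  · refine exists_pairing_answer hsub (fun e he => ?_) hdisj ?_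
    · rw [hm, Finset.sdiff_empty, hunif e he]
    · rw [hm, Finset.sdiff_empty]
      omega

end MB

/-- Theorem 1.22: on graphs, Breaker wins iff `J_1` of the trivial danger of size 2 holds,
equivalently iff the graph is a matching. -/
theorem statement9 {V : Type} [DecidableEq V] (G : MB.MarkedHypergraph V)
    (hval : G.IsValid) (hunif : G.IsUniform 2) (hm : G.marked = ∅)
    (hcard : 2 ≤ G.verts.card) :
    (G.BreakerWin ↔ MB.J MB.famTriv2 1 G) ∧
    (G.BreakerWin ↔ ∀ e ∈ G.edges, ∀ f ∈ G.edges, e ≠ f → e ∩ f = ∅) := by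
  have hsub : ∀ e ∈ G.edges, e ⊆ G.verts := fun e he => (hval.2.1 e he).1
  have hbreaker := MB.breakerWin_iff_pairwise_disjoint hsub hunif hm
  exact ⟨hbreaker.trans (MB.J_one_famTriv2_iff_pairwise_disjoint hsub hunif hm hcard).symm,
    hbreaker⟩
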